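/- arXiv:math/0410143 — 4 statements merged into one kernel-verified Lean document; each statement's English description precedes it below -/
import Mathlib

section
/- The class of indicator functions of convex closed subsets of [-1/2,1/2]^d is L^2-equicontinuous under translations: for every ε > 0 there is δ > 0 such that for all convex closed C ⊆ [-1/2,1/2]^d and all w ∈ R^d with |w|_2 < δ, ∫_{R^d} (1_C(x) - 1_C(x+w))^2 dx < ε. -/
/-!
The measure `|C ∆ (C - w)|` is subadditive in `w` by translation invariance of Lebesgue measure,
so it suffices to translate along one coordinate axis at a time. For a translation by `t` along
an axis, Fubini reduces the estimate to lines parallel to that axis: each such line meets the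
convex set `C` in an interval, and translating an interval by `t` only changes it within `|t|` of
its two endpoints, a set of length at most `4|t|`; since `C` lies in the unit cube, the lines
meeting `C` form a set of measure at most `1`. Hence `|C ∆ (C - w)| ≤ 4 ∑ᵢ |wᵢ| ≤ 4 d ‖w‖`.
-/

open MeasureTheory Metric

/-- The unit cube `[-1/2, 1/2]^d` in `ℝ^d`. -/
def unitCube (d : ℕ) : Set (EuclideanSpace ℝ (Fin d)) := {x | ∀ i, |x i| ≤ 1/2}

open Set
open scoped symmDiff

section TranslationDefect

variable {G : Type*} [MeasurableSpace G] (μ : Measure G)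

theorem measure_symmDiff_preimage_add_add_le [AddGroup G] [MeasurableAdd G]
    [μ.IsAddRightInvariant] (s : Set G) (u v : G) :
    μ (s ∆ ((· + (u + v)) ⁻¹' s)) ≤ μ (s ∆ ((· + u) ⁻¹' s)) + μ (s ∆ ((· + v) ⁻¹' s)) := by
  have hcomp : (· + (u + v)) ⁻¹' s = (· + u) ⁻¹' ((· + v) ⁻¹' s) := by
    ext x; simp [add_assoc]
  calc μ (s ∆ ((· + (u + v)) ⁻¹' s))
      ≤ μ (s ∆ ((· + u) ⁻¹' s) ∪ (· + u) ⁻¹' (s ∆ ((· + v) ⁻¹' s))) := by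
        rw [hcomp, preimage_symmDiff]
        exact measure_mono (symmDiff_triangle _ _ _)
    _ ≤ μ (s ∆ ((· + u) ⁻¹' s)) + μ ((· + u) ⁻¹' (s ∆ ((· + v) ⁻¹' s))) := measure_union_le _ _
    _ = μ (s ∆ ((· + u) ⁻¹' s)) + μ (s ∆ ((· + v) ⁻¹' s)) := by
        rw [measure_preimage_add_right]

theorem measure_symmDiff_preimage_add_sum_le [AddCommGroup G] [MeasurableAdd G]
    [μ.IsAddRightInvariant] {ι : Type*} (s : Set G) (t : Finset ι) (v : ι → G) :
    μ (s ∆ ((· + ∑ i ∈ t, v i) ⁻¹' s)) ≤ ∑ i ∈ t, μ (s ∆ ((· + v i) ⁻¹' s)) :=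
  Finset.le_sum_of_subadditive (fun u => μ (s ∆ ((· + u) ⁻¹' s))) (by simp)
    (measure_symmDiff_preimage_add_add_le μ s) t v

end TranslationDefect

theorem Real.volume_symmDiff_preimage_add_le {s : Set ℝ} (hs : IsPreconnected s)
    (hs_bdd : Bornology.IsBounded s) (t : ℝ) :
    volume (s ∆ ((· + t) ⁻¹' s)) ≤ ENNReal.ofReal (4 * |t|) := by
  rcases s.eq_empty_or_nonempty with rfl | hne
  · simp
  obtain ⟨hbelow, habove⟩ := isBounded_iff_bddBelow_bddAbove.1 hs_bdd
  have hIcc := subset_Icc_csInf_csSup hbelow habove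
  have hIoo := IsConnected.Ioo_csInf_csSup_subset ⟨hne, hs⟩ hbelow habove
  set ends := closedBall (sInf s) |t| ∪ closedBall (sSup s) |t|
  -- an endpoint of `s` lies between a point of `s` and a point outside it
  have key : ∀ {u v}, u ∈ s → v ∉ s → |u - v| ≤ |t| → u ∈ ends ∧ v ∈ ends := by
    intro u v hu hv huv
    obtain ⟨hau, hub⟩ := hIcc hu
    have hv' : v ≤ sInf s ∨ sSup s ≤ v := by
      by_contra! h
      exact hv (hIoo h)
    simp only [ends, mem_union, mem_closedBall, Real.dist_eq]
    rw [abs_le] at huv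
    rcases hv' with hv' | hv' <;> [refine ⟨.inl ?_, .inl ?_⟩; refine ⟨.inr ?_, .inr ?_⟩] <;>
      rw [abs_le] <;> constructor <;> linarith
  have hsub : s ∆ ((· + t) ⁻¹' s) ⊆ ends := by
    rintro x (⟨hx, hxt⟩ | ⟨hxt, hx⟩)
    · exact (key hx hxt (by simp)).1
    · exact (key hxt hx (by simp)).2
  calc volume (s ∆ ((· + t) ⁻¹' s)) ≤ volume ends := measure_mono hsub
    _ ≤ ENNReal.ofReal (2 * |t|) + ENNReal.ofReal (2 * |t|) :=
        (measure_union_le _ _).trans_eq (by rw [Real.volume_closedBall, Real.volume_closedBall])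
    _ = ENNReal.ofReal (4 * |t|) := by
        rw [← ENNReal.ofReal_add (by positivity) (by positivity)]
        ring_nf

section Slices

variable {n : ℕ} (k : Fin (n + 1))

theorem volume_eq_lintegral_volume_insertNth_preimage {α : Type*} [MeasureSpace α]
    [SigmaFinite (volume : Measure α)] {E : Set (Fin (n + 1) → α)} (hE : MeasurableSet E) :
    volume E = ∫⁻ y : Fin n → α, volume ((fun c : α => k.insertNth c y) ⁻¹' E) := by
  have he := volume_preserving_piFinSuccAbove (fun _ : Fin (n + 1) => α) k
  rw [← he.symm.measure_preimage_equiv E, Measure.volume_eq_prod,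
    Measure.prod_apply_symm (hE.preimage (MeasurableEquiv.measurable _))]
  rfl

theorem Fin.insertNth_add_single {M : Type*} [AddZeroClass M] (c t : M) (y : Fin n → M) :
    k.insertNth (c + t) y = k.insertNth c y + (Pi.single k t : Fin (n + 1) → M) := by
  rw [← Fin.insertNth_zero_right, ← Fin.insertNth_add, add_zero]

theorem Convex.insertNth_preimage {C : Set (Fin (n + 1) → ℝ)} (hC : Convex ℝ C)
    (y : Fin n → ℝ) : Convex ℝ ((fun c : ℝ => k.insertNth c y) ⁻¹' C) := by
  have hline : (fun c : ℝ => k.insertNth c y) =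
      fun c => k.insertNth 0 y + LinearMap.single ℝ (fun _ => ℝ) k c := by
    funext c
    simpa using Fin.insertNth_add_single k 0 c y
  rw [hline]
  exact (hC.translate_preimage_right _).linear_preimage _

theorem preimage_insertNth_preimage_add_single (C : Set (Fin (n + 1) → ℝ)) (t : ℝ)
    (y : Fin n → ℝ) :
    (fun c : ℝ => k.insertNth c y) ⁻¹' ((· + Pi.single k t) ⁻¹' C) =
      (· + t) ⁻¹' ((fun c : ℝ => k.insertNth c y) ⁻¹' C) := by
  ext c
  simp [Fin.insertNth_add_single]

theorem volume_symmDiff_preimage_add_single_le {C : Set (Fin (n + 1) → ℝ)} (hC : Convex ℝ C)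
    (hCm : MeasurableSet C) (hC_cube : C ⊆ univ.pi fun _ => Icc (-(1 / 2)) (1 / 2)) (t : ℝ) :
    volume (C ∆ ((· + Pi.single k t) ⁻¹' C)) ≤ ENNReal.ofReal (4 * |t|) := by
  set cube : Set (Fin n → ℝ) := univ.pi fun _ => Icc (-(1 / 2)) (1 / 2)
  have hslice (y : Fin n → ℝ) :
      volume ((fun c : ℝ => k.insertNth c y) ⁻¹' (C ∆ ((· + Pi.single k t) ⁻¹' C))) ≤
        cube.indicator (fun _ => ENNReal.ofReal (4 * |t|)) y := by
    rw [preimage_symmDiff, preimage_insertNth_preimage_add_single]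
    by_cases hy : y ∈ cube
    · rw [indicator_of_mem hy]
      refine Real.volume_symmDiff_preimage_add_le (hC.insertNth_preimage k y).isPreconnected
        (isBounded_Icc (-(1 / 2) : ℝ) (1 / 2) |>.subset fun c hc => ?_) t
      simpa using hC_cube hc k
    · have hS : (fun c : ℝ => k.insertNth c y) ⁻¹' C = ∅ :=
        eq_empty_of_forall_notMem fun c hc => hy fun i _ => by
          simpa using hC_cube hc (k.succAbove i)
      rw [hS]
      simp
  rw [volume_eq_lintegral_volume_insertNth_preimage k
    (hCm.symmDiff (measurable_add_const _ hCm))]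
  calc _ ≤ ∫⁻ y, cube.indicator (fun _ => ENNReal.ofReal (4 * |t|)) y := lintegral_mono hslice
    _ = ENNReal.ofReal (4 * |t|) := by
        rw [lintegral_indicator_const (MeasurableSet.univ_pi fun _ => measurableSet_Icc),
          volume_pi_pi]
        norm_num

end Slices

theorem volume_symmDiff_preimage_add_le_sum {d : ℕ} {C : Set (Fin d → ℝ)} (hC : Convex ℝ C)
    (hCm : MeasurableSet C) (hC_cube : C ⊆ univ.pi fun _ => Icc (-(1 / 2)) (1 / 2))
    (w : Fin d → ℝ) :
    volume (C ∆ ((· + w) ⁻¹' C)) ≤ ∑ i, ENNReal.ofReal (4 * |w i|) := by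
  calc volume (C ∆ ((· + w) ⁻¹' C))
      = volume (C ∆ ((· + ∑ i, (Pi.single i (w i) : Fin d → ℝ)) ⁻¹' C)) := by
        rw [Finset.univ_sum_single]
    _ ≤ ∑ i, volume (C ∆ ((· + (Pi.single i (w i) : Fin d → ℝ)) ⁻¹' C)) :=
        measure_symmDiff_preimage_add_sum_le _ _ _ _
    _ ≤ ∑ i, ENNReal.ofReal (4 * |w i|) := Finset.sum_le_sum fun i _ => by
        obtain ⟨n, rfl⟩ : ∃ n, d = n + 1 := Nat.exists_eq_add_one.2 i.pos
        exact volume_symmDiff_preimage_add_single_le i hC hCm hC_cube (w i)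

theorem EuclideanSpace.volume_symmDiff_preimage_add_le {d : ℕ}
    {C : Set (EuclideanSpace ℝ (Fin d))} (hC : Convex ℝ C) (hCm : MeasurableSet C)
    (hC_cube : C ⊆ unitCube d) (w : EuclideanSpace ℝ (Fin d)) :
    volume (C ∆ ((· + w) ⁻¹' C)) ≤ ENNReal.ofReal (4 * d * ‖w‖) := by
  have he := (EuclideanSpace.volume_preserving_symm_measurableEquiv_toLp (Fin d)).symm
  set C' := WithLp.toLp 2 ⁻¹' C
  have hC' : Convex ℝ C' :=
    hC.linear_preimage (WithLp.linearEquiv 2 ℝ (Fin d → ℝ)).symm.toLinearMap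
  have hC'_cube : C' ⊆ univ.pi fun _ => Icc (-(1 / 2)) (1 / 2) :=
    fun x hx i _ => abs_le.1 (hC_cube hx i)
  rw [← he.measure_preimage_equiv]
  calc volume (C' ∆ ((· + w.ofLp) ⁻¹' C'))
      ≤ ∑ i, ENNReal.ofReal (4 * |w i|) :=
        volume_symmDiff_preimage_add_le_sum hC' (hCm.preimage (by fun_prop)) hC'_cube w.ofLp
    _ ≤ ENNReal.ofReal (4 * d * ‖w‖) := by
        rw [← ENNReal.ofReal_sum_of_nonneg fun i _ => by positivity]
        gcongr
        calc ∑ i, 4 * |w i| ≤ ∑ _i : Fin d, 4 * ‖w‖ := Finset.sum_le_sum fun i _ => by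
              gcongr
              exact PiLp.norm_apply_le w i
          _ = 4 * d * ‖w‖ := by
              simp only [Finset.sum_const, Finset.card_univ, Fintype.card_fin, nsmul_eq_mul]
              ring

theorem integral_sq_indicator_sub_indicator_add {G : Type*} [AddGroup G] [MeasurableSpace G]
    [MeasurableAdd G] (μ : Measure G) {s : Set G} (hs : MeasurableSet s) (w : G) :
    ∫ x, (s.indicator (fun _ => (1 : ℝ)) x - s.indicator (fun _ => (1 : ℝ)) (x + w)) ^ 2 ∂μ =
      μ.real (s ∆ ((· + w) ⁻¹' s)) := by
  have hsq : (fun x => (s.indicator (fun _ => (1 : ℝ)) x - s.indicator (fun _ => 1) (x + w)) ^ 2)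
      = (s ∆ ((· + w) ⁻¹' s)).indicator fun _ => 1 := by
    funext x
    by_cases hx : x ∈ s <;> by_cases hxw : x + w ∈ s <;>
      simp [mem_symmDiff, hx, hxw]
  rw [hsq, integral_indicator_const _ (hs.symmDiff (measurable_add_const w hs)), smul_eq_mul,
    mul_one]

/-- The class of indicators of convex closed subsets of `[-1/2,1/2]^d` is `L²`-equicontinuous
under translations. -/
theorem stmt_2 (d : ℕ) :
    ∀ ε : ℝ, 0 < ε → ∃ δ : ℝ, 0 < δ ∧
      ∀ C : Set (EuclideanSpace ℝ (Fin d)), Convex ℝ C → IsClosed C → C ⊆ unitCube d →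
      ∀ w : EuclideanSpace ℝ (Fin d), ‖w‖ < δ →
        (∫ x, (Set.indicator C (fun _ => (1:ℝ)) x - Set.indicator C (fun _ => (1:ℝ)) (x + w)) ^ 2)
          < ε := by
  intro ε hε
  have hd : (0 : ℝ) < 4 * d + 1 := by positivity
  refine ⟨ε / (4 * d + 1), by positivity, fun C hC hC_closed hC_cube w hw => ?_⟩
  have hCm := hC_closed.measurableSet
  rw [integral_sq_indicator_sub_indicator_add volume hCm w]
  calc volume.real (C ∆ ((· + w) ⁻¹' C))
      ≤ 4 * d * ‖w‖ := ENNReal.toReal_le_of_le_ofReal (by positivity)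
        (EuclideanSpace.volume_symmDiff_preimage_add_le hC hCm hC_cube w)
    _ ≤ (4 * d + 1) * ‖w‖ := by nlinarith [norm_nonneg w]
    _ < (4 * d + 1) * (ε / (4 * d + 1)) := by gcongr
    _ = ε := mul_div_cancel₀ ε hd.ne'
end

section
/- Generalized Ottaviani inequality: Let Λ be a countable index set, B a separable Banach space, and {S_m(t) : t ∈ Λ, 0 ≤ m ≤ n} processes with values in B, S_0(t) = 0, such that for each 1 ≤ m ≤ n the process {S_n(t) - S_m(t) : t ∈ Λ} is independent of {S_k(t) : t ∈ Λ, 1 ≤ k ≤ m}. Suppose that for some τ > 0, c := max_{0 ≤ m ≤ n} sup_{t ∈ Λ} P(‖S_n(t) - S_m(t)‖ ≥ τ) < 1. Then for every Borel set A ⊆ B and every ε > 0, P(∃ t ∈ Λ, ∃ 1 ≤ m ≤ n : S_m(t) ∉ A^{ε+τ}) ≤ (1-c)^{-1} P(∃ t ∈ Λ : S_n(t) ∉ A^ε). -/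
/-!
Decompose the bad event `{∃ t, ∃ 1 ≤ m ≤ n, S m t ∉ A^{ε+τ}}` according to the first pair
`(m, t)`, in the lexicographic order (time first), at which the path leaves `A^{ε+τ}`. The event
`E` that this happens at `(m, t)` is determined by `S 1, …, S m`, hence independent of
`G = {‖S n t - S m t‖ < τ}`, which has probability at least `1 - c`; and on `G ∩ E` the endpoint
`S n t` lies outside `A^ε`. Summing `(1 - c) P(E) ≤ P(G ∩ E)` over the disjoint events `E` gives
the inequality.
-/

open MeasureTheory Metric ProbabilityTheory Set

section FirstHit

variable {α β Ω : Type*} [LinearOrder β] (r : α → β) (f : α → Set Ω)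

def firstHit (p : α) : Set Ω := f p \ ⋃ (q) (_ : r q < r p), f q

theorem firstHit_subset (p : α) : firstHit r f p ⊆ f p := sdiff_subset

theorem iUnion_firstHit [WellFoundedLT β] : ⋃ p, firstHit r f p = ⋃ p, f p := by
  refine (iUnion_mono (firstHit_subset r f)).antisymm fun ω hω => ?_
  obtain ⟨p₀, hp₀⟩ := mem_iUnion.1 hω
  obtain ⟨p, hp, hmin⟩ :=
    (InvImage.wf r wellFounded_lt).has_min {p | ω ∈ f p} ⟨p₀, hp₀⟩
  refine mem_iUnion.2 ⟨p, hp, ?_⟩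
  simp only [mem_iUnion, not_exists]
  exact fun q hq hωq => hmin q hωq hq

theorem pairwise_disjoint_firstHit (hr : Function.Injective r) :
    Pairwise (Function.onFun Disjoint (firstHit r f)) := by
  have key : ∀ p q, r p < r q → Disjoint (firstHit r f p) (firstHit r f q) := fun p q h =>
    disjoint_left.2 fun ω hp hq => hq.2 (mem_biUnion (s := {q' | r q' < r q}) h hp.1)
  intro p q hpq
  rcases lt_or_gt_of_ne (hr.ne hpq) with h | h
  · exact key p q h
  · exact (key q p h).symm

theorem measurableSet_firstHit [Countable α] {m : MeasurableSpace Ω} {p : α}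
    (h : ∀ q, r q ≤ r p → MeasurableSet[m] (f q)) : MeasurableSet[m] (firstHit r f p) :=
  (h p le_rfl).diff <| .iUnion fun q => .iUnion fun hq => h q hq.le

end FirstHit

section Measure

variable {Ω : Type*} {mΩ : MeasurableSpace Ω} {μ : Measure Ω}

theorem mul_measure_iUnion_le_of_disjoint {α : Type*} [Countable α] {E : α → Set Ω}
    {F : Set Ω} {a : ENNReal} (hE : ∀ p, MeasurableSet (E p))
    (hdisj : Pairwise (Function.onFun Disjoint E))
    (h : ∀ p, a * μ (E p) ≤ μ (E p ∩ F)) : a * μ (⋃ p, E p) ≤ μ F :=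
  calc a * μ (⋃ p, E p) ≤ a * ∑' p, μ (E p) := by gcongr; exact measure_iUnion_le E
    _ = ∑' p, a * μ (E p) := ENNReal.tsum_mul_left.symm
    _ ≤ ∑' p, μ.restrict F (E p) := by
      gcongr with p; rw [Measure.restrict_apply (hE p)]; exact h p
    _ ≤ μ.restrict F (⋃ p, E p) := tsum_meas_le_meas_iUnion_of_disjoint _ hE hdisj
    _ ≤ μ F := (measure_mono (subset_univ _)).trans_eq (Measure.restrict_apply_univ F)

theorem ofReal_one_sub_le_prob [IsProbabilityMeasure μ] {s : Set Ω} {c : ℝ}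
    (h : (μ sᶜ).toReal ≤ c) : ENNReal.ofReal (1 - c) ≤ μ s := by
  have hcover : 1 ≤ (μ s).toReal + (μ sᶜ).toReal := by
    rw [← ENNReal.toReal_add (measure_ne_top μ s) (measure_ne_top μ sᶜ)]
    simpa using ENNReal.toReal_mono (by finiteness) (measure_univ_le_add_compl (μ := μ) s)
  rw [← ENNReal.ofReal_toReal (measure_ne_top μ s)]
  exact ENNReal.ofReal_le_ofReal (by linarith)

theorem ofReal_one_sub_mul_le_of_indep {m₁ m₂ : MeasurableSpace Ω} [IsProbabilityMeasure μ]
    (hind : Indep m₁ m₂ μ) {G E F : Set Ω} {c : ℝ} (hG : MeasurableSet[m₁] G)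
    (hE : MeasurableSet[m₂] E) (hGc : (μ Gᶜ).toReal ≤ c) (hGEF : G ∩ E ⊆ F) :
    ENNReal.ofReal (1 - c) * μ E ≤ μ (E ∩ F) :=
  calc ENNReal.ofReal (1 - c) * μ E ≤ μ G * μ E := by
        gcongr; exact ofReal_one_sub_le_prob hGc
    _ = μ (G ∩ E) := ((Indep_iff _ _ _).1 hind G E hG hE).symm
    _ ≤ μ (E ∩ F) := measure_mono fun ω hω => ⟨hω.2, hGEF hω⟩

end Measure

theorem measurable_iSup_comap {κ ι Ω B : Type*} [MeasurableSpace B] (X : κ → ι → Ω → B)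
    (s : Set κ) {k : κ} (hk : k ∈ s) (t : ι) :
    Measurable[⨆ k ∈ s, ⨆ t, MeasurableSpace.comap (X k t) inferInstance] (X k t) :=
  (comap_measurable (X k t)).mono
    (le_iSup₂_of_le
      (f := fun k (_ : k ∈ s) => ⨆ t, MeasurableSpace.comap (X k t) inferInstance) k hk
      (le_iSup (fun t => MeasurableSpace.comap (X k t) inferInstance) t)) le_rfl

theorem ofReal_one_sub_mul_le_measure_inter_exists_notMem_thickening
    {Ω : Type*} [MeasurableSpace Ω] {P : Measure Ω} [IsProbabilityMeasure P] {B : Type*} [NormedAddCommGroup B]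
    [MeasurableSpace B] [BorelSpace B] {ι : Type*} {n m : ℕ} {S : ℕ → ι → Ω → B}
    {𝔪 : MeasurableSpace Ω}
    (hindep : Indep (⨆ t : ι, MeasurableSpace.comap (fun ω => S n t ω - S m t ω) inferInstance)
      𝔪 P)
    {τ c : ℝ} (hcb : ∀ t, (P {ω | τ ≤ ‖S n t ω - S m t ω‖}).toReal ≤ c) {A : Set B} {ε : ℝ}
    {t : ι} {E : Set Ω} (hE : MeasurableSet[𝔪] E)
    (hEA : ∀ ω ∈ E, S m t ω ∉ thickening (ε + τ) A) :
    ENNReal.ofReal (1 - c) * P E ≤ P (E ∩ {ω | ∃ t, S n t ω ∉ thickening ε A}) := by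
  have hdiff : Measurable[⨆ t : ι, MeasurableSpace.comap (fun ω => S n t ω - S m t ω)
      inferInstance] (fun ω => S n t ω - S m t ω) :=
    (comap_measurable _).mono (le_iSup (fun t => MeasurableSpace.comap
      (fun ω => S n t ω - S m t ω) inferInstance) t) le_rfl
  refine ofReal_one_sub_mul_le_of_indep (G := {ω | ‖S n t ω - S m t ω‖ < τ}) hindep
    (hdiff (measurable_norm measurableSet_Iio)) hE (by simpa [compl_ofPred] using hcb t) ?_
  rintro ω ⟨hclose, hω⟩
  refine ⟨t, fun hn => hEA ω hω ?_⟩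
  rw [add_comm]
  refine thickening_thickening_subset τ ε A (mem_thickening_iff.2 ⟨_, hn, ?_⟩)
  rw [dist_eq_norm, norm_sub_rev]
  exact hclose

theorem stmt_6_general {Ω : Type*} [MeasurableSpace Ω] (P : Measure Ω) [IsProbabilityMeasure P]
    {B : Type*} [NormedAddCommGroup B] [MeasurableSpace B] [BorelSpace B]
    {ι : Type*} [Countable ι]
    (n : ℕ) (S : ℕ → ι → Ω → B)
    (hmeas : ∀ m t, Measurable (S m t))
    (hindep : ∀ m, 1 ≤ m → m ≤ n →
      Indep (⨆ t : ι, MeasurableSpace.comap (fun ω => S n t ω - S m t ω) inferInstance)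
        (⨆ k ∈ Set.Icc 1 m, ⨆ t : ι, MeasurableSpace.comap (S k t) inferInstance) P)
    (τ c : ℝ) (hc1 : c < 1)
    (hcb : ∀ m ≤ n, ∀ t, (P {ω | τ ≤ ‖S n t ω - S m t ω‖}).toReal ≤ c)
    (A : Set B) (ε : ℝ) :
    P {ω | ∃ t, ∃ m, 1 ≤ m ∧ m ≤ n ∧ S m t ω ∉ thickening (ε + τ) A} ≤
      ENNReal.ofReal (1 - c)⁻¹ * P {ω | ∃ t, S n t ω ∉ thickening ε A} := by
  obtain ⟨e, he⟩ := Countable.exists_injective_nat ι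
  let r : ℕ × ι → ℕ ×ₗ ℕ := fun p => toLex (p.1, e p.2)
  have hr : Function.Injective r := fun p q h => by
    simp only [r, toLex_inj, Prod.mk.injEq] at h
    exact Prod.ext h.1 (he h.2)
  let bad : ℕ × ι → Set Ω :=
    fun p => {ω | p.1 ∈ Icc 1 n ∧ S p.1 p.2 ω ∉ thickening (ε + τ) A}
  have hbad : ∀ {m : MeasurableSpace Ω} p, (p.1 ∈ Icc 1 n → Measurable[m] (S p.1 p.2)) →
      MeasurableSet[m] (bad p) := by
    intro m p hS
    by_cases hp : p.1 ∈ Icc 1 n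
    · simp only [bad, hp, true_and]
      exact hS hp isOpen_thickening.measurableSet.compl
    · simp only [bad, hp, false_and, ofPred_false, MeasurableSet.empty]
  have hfirst : {ω | ∃ t, ∃ m, 1 ≤ m ∧ m ≤ n ∧ S m t ω ∉ thickening (ε + τ) A} =
      ⋃ p, firstHit r bad p := by
    ext ω; simp [iUnion_firstHit, bad, and_assoc, exists_comm (α := ι)]
  rw [ENNReal.ofReal_inv_of_pos (by linarith), ← ENNReal.div_eq_inv_mul,
    ENNReal.le_div_iff_mul_le (.inl (ENNReal.ofReal_pos.2 (by linarith)).ne')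
    (.inl ENNReal.ofReal_ne_top), mul_comm, hfirst]
  refine mul_measure_iUnion_le_of_disjoint
    (fun p => measurableSet_firstHit r bad fun q _ => hbad q fun _ => hmeas _ _)
    (pairwise_disjoint_firstHit r bad hr) fun p => ?_
  by_cases hp : p.1 ∈ Icc 1 n
  · refine ofReal_one_sub_mul_le_measure_inter_exists_notMem_thickening (hindep p.1 hp.1 hp.2)
      (fun t => hcb p.1 hp.2 t) (measurableSet_firstHit r bad fun q hq => hbad q fun hq' => ?_)
      fun ω hω => (firstHit_subset r bad p hω).2
    exact measurable_iSup_comap S (Icc 1 p.1) ⟨hq'.1, Prod.Lex.monotone_fst (r q) (r p) hq⟩ q.2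
  · have hE : firstHit r bad p = ∅ :=
      subset_empty_iff.1 fun ω hω => hp (firstHit_subset r bad p hω).1
    simp [hE]

/-- Generalized Ottaviani inequality for processes indexed by a countable set `ι` with values in a
separable Banach space `B`. -/
theorem stmt_6 {Ω : Type*} [MeasurableSpace Ω] (P : Measure Ω) [IsProbabilityMeasure P]
    {B : Type*} [NormedAddCommGroup B] [NormedSpace ℝ B] [CompleteSpace B]
    [TopologicalSpace.SeparableSpace B] [MeasurableSpace B] [BorelSpace B]
    {ι : Type*} [Countable ι]
    (n : ℕ) (S : ℕ → ι → Ω → B)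
    (hmeas : ∀ m t, Measurable (S m t))
    (hS0 : ∀ t ω, S 0 t ω = 0)
    (hindep : ∀ m, 1 ≤ m → m ≤ n →
      Indep (⨆ t : ι, MeasurableSpace.comap (fun ω => S n t ω - S m t ω) inferInstance)
        (⨆ k ∈ Set.Icc 1 m, ⨆ t : ι, MeasurableSpace.comap (S k t) inferInstance) P)
    (τ c : ℝ) (hτ : 0 < τ) (hc0 : 0 ≤ c) (hc1 : c < 1)
    (hcb : ∀ m ≤ n, ∀ t, (P {ω | τ ≤ ‖S n t ω - S m t ω‖}).toReal ≤ c)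
    (A : Set B) (hA : MeasurableSet A) (ε : ℝ) (hε : 0 < ε) :
    P {ω | ∃ t, ∃ m, 1 ≤ m ∧ m ≤ n ∧ S m t ω ∉ thickening (ε + τ) A} ≤
      ENNReal.ofReal (1 - c)⁻¹ * P {ω | ∃ t, S n t ω ∉ thickening ε A} :=
  stmt_6_general P n S hmeas hindep τ c hc1 hcb A ε
end

section
/- Let f be a density that satisfies 0 < β_1 ≤ f(z) ≤ β_2 < ∞ for all z in J_γ, the γ-neighborhood of a compact set J. Let g be measurable with support in I^d = [-1/2,1/2]^d and bounded, and let Z have density f. Then for z, z' ∈ J with the cubes z - h^{1/d} I^d and z' - h^{1/d} I^d contained in J_γ, E[(g(h^{-1/d}(z - Z)) - g(h^{-1/d}(z' - Z)))^2] ≤ (2 β_2^2 / β_1) · h · ∫_{R^d} [g(x) - g(x + h^{-1/d}(z' - z))]^2 dx. -/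
/-!
Only points `x` at which one of the two rescaled copies of `g` is nonzero contribute, and these
lie in the two cubes, where `f ≤ β₂`. Translating by `z` and rescaling by `h^{1/d}` turns the
remaining Lebesgue integral into `h ∫ (g x - g (x + h^{-1/d} (z' - z)))² dx`, and `β₂ ≤ 2β₂²/β₁`
because `β₁ ≤ β₂`.
-/

open MeasureTheory Metric

theorem integral_mul_le_of_mem_Icc_of_ne_zero {α : Type*} [MeasurableSpace α] {μ : Measure α}
    {S f : α → ℝ} {β₁ β₂ : ℝ} (hβ₁ : 0 < β₁) (hβ₂ : 0 ≤ β₂) (hS : ∀ x, 0 ≤ S x)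
    (hSm : AEStronglyMeasurable S μ) (hf : ∀ x, S x ≠ 0 → f x ∈ Set.Icc β₁ β₂) :
    ∫ x, S x * f x ∂μ ≤ β₂ * ∫ x, S x ∂μ := by
  have hSf : ∀ x, β₁ * S x ≤ S x * f x ∧ S x * f x ≤ β₂ * S x := by
    intro x
    rcases eq_or_ne (S x) 0 with h0 | h0
    · simp [h0]
    · obtain ⟨h1, h2⟩ := hf x h0
      constructor <;> nlinarith [hS x]
  -- `S ≤ β₁⁻¹ * (S * f)`, so `S` is integrable as soon as `S * f` is; if not, the left side is `0`.
  by_cases hint : Integrable (fun x => S x * f x) μ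
  · have hSint : Integrable S μ := by
      refine (hint.const_mul β₁⁻¹).mono' hSm (ae_of_all _ fun x => ?_)
      rw [Real.norm_of_nonneg (hS x), le_inv_mul_iff₀ hβ₁]
      exact (hSf x).1
    rw [← integral_const_mul]
    exact integral_mono hint (hSint.const_mul β₂) fun x => (hSf x).2
  · rw [integral_undef hint]
    exact mul_nonneg hβ₂ (integral_nonneg hS)

theorem integral_comp_inv_smul_sub {E F : Type*} [NormedAddCommGroup E] [NormedSpace ℝ E]
    [MeasurableSpace E] [BorelSpace E] [FiniteDimensional ℝ E] (μ : Measure E)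
    [μ.IsAddHaarMeasure] [NormedAddCommGroup F] [NormedSpace ℝ F] (φ : E → F) {c : ℝ}
    (hc : 0 ≤ c) (z : E) :
    ∫ x, φ (c⁻¹ • (z - x)) ∂μ = c ^ Module.finrank ℝ E • ∫ x, φ x ∂μ := by
  rw [integral_sub_left_eq_self (fun y => φ (c⁻¹ • y)) μ z,
    Measure.integral_comp_inv_smul_of_nonneg μ φ hc]

theorem mem_image_sub_smul_of_comp_ne_zero {𝕜 E M : Type*} [Field 𝕜] [AddCommGroup E]
    [Module 𝕜 E] [Zero M] {g : E → M} {A : Set E} (hg : ∀ x, x ∉ A → g x = 0) {c : 𝕜}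
    (hc : c ≠ 0) {w x : E} (hx : g (c⁻¹ • (w - x)) ≠ 0) :
    x ∈ (fun u => w - c • u) '' A :=
  ⟨c⁻¹ • (w - x), not_imp_comm.mp (hg _) hx, by simp [smul_inv_smul₀ hc]⟩

theorem stmt_8_general (d : ℕ) (hd : 0 < d)
    (f g : EuclideanSpace ℝ (Fin d) → ℝ)
    (J : Set (EuclideanSpace ℝ (Fin d)))
    (γ β₁ β₂ : ℝ) (hβ₁ : 0 < β₁)
    (hβ : ∀ x ∈ cthickening γ J, β₁ ≤ f x ∧ f x ≤ β₂)
    (hgmeas : Measurable g) (hgsupp : ∀ x, x ∉ unitCube d → g x = 0)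
    (h : ℝ) (hh : 0 < h) (z z' : EuclideanSpace ℝ (Fin d))
    (hcz : (fun u => z - h ^ (1 / (d:ℝ)) • u) '' unitCube d ⊆ cthickening γ J)
    (hcz' : (fun u => z' - h ^ (1 / (d:ℝ)) • u) '' unitCube d ⊆ cthickening γ J) :
    (∫ x, (g ((h ^ (1 / (d:ℝ)))⁻¹ • (z - x)) - g ((h ^ (1 / (d:ℝ)))⁻¹ • (z' - x))) ^ 2 * f x) ≤
      2 * β₂ ^ 2 / β₁ * h *
        ∫ x, (g x - g (x + (h ^ (1 / (d:ℝ)))⁻¹ • (z' - z))) ^ 2 := by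
  set c : ℝ := h ^ (1 / (d:ℝ)) with hc_def
  have hc : 0 < c := Real.rpow_pos_of_pos hh _
  have hcd : c ^ d = h := by
    rw [hc_def, ← Real.rpow_natCast, ← Real.rpow_mul hh.le,
      one_div_mul_cancel (by positivity), Real.rpow_one]
  set φ : EuclideanSpace ℝ (Fin d) → ℝ := fun y => (g y - g (y + c⁻¹ • (z' - z))) ^ 2
  have hshift : ∀ x, c⁻¹ • (z' - x) = c⁻¹ • (z - x) + c⁻¹ • (z' - z) := fun x => by
    rw [← smul_add, sub_add_sub_cancel']
  have hf_supp : ∀ x, φ (c⁻¹ • (z - x)) ≠ 0 → f x ∈ Set.Icc β₁ β₂ := by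
    intro x hx
    have hg_ne : g (c⁻¹ • (z - x)) ≠ 0 ∨ g (c⁻¹ • (z' - x)) ≠ 0 := by
      by_contra! h0
      exact hx (by simp [φ, ← hshift, h0.1, h0.2])
    rcases hg_ne with hne | hne
    exacts [hβ x (hcz (mem_image_sub_smul_of_comp_ne_zero hgsupp hc.ne' hne)),
      hβ x (hcz' (mem_image_sub_smul_of_comp_ne_zero hgsupp hc.ne' hne))]
  have hβ₁₂ : β₁ ≤ β₂ := by
    obtain ⟨h₁, h₂⟩ := hβ z (hcz ⟨0, fun i => by norm_num, by simp⟩)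
    exact h₁.trans h₂
  have hφm : Measurable φ := by fun_prop
  calc (∫ x, (g (c⁻¹ • (z - x)) - g (c⁻¹ • (z' - x))) ^ 2 * f x)
      = ∫ x, φ (c⁻¹ • (z - x)) * f x := by
        congr 1 with x
        rw [hshift x]
    _ ≤ β₂ * ∫ x, φ (c⁻¹ • (z - x)) :=
        integral_mul_le_of_mem_Icc_of_ne_zero hβ₁ (hβ₁.le.trans hβ₁₂) (fun x => sq_nonneg _)
          (hφm.comp (by fun_prop)).aestronglyMeasurable hf_supp
    _ = β₂ * h * ∫ x, φ x := by
        rw [integral_comp_inv_smul_sub volume φ hc.le, finrank_euclideanSpace_fin, hcd,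
          smul_eq_mul, mul_assoc]
    _ ≤ 2 * β₂ ^ 2 / β₁ * h * ∫ x, φ x := by
        have hβ₂ : β₂ ≤ 2 * β₂ ^ 2 / β₁ := by
          rw [le_div_iff₀ hβ₁]
          nlinarith
        gcongr

/-- If the density `f` satisfies `0 < β₁ ≤ f ≤ β₂` on the `γ`-neighborhood `J_γ` of a compact set
`J`, `g` is bounded, measurable and supported in `I^d`, and both cubes `z - h^{1/d} I^d` and
`z' - h^{1/d} I^d` lie in `J_γ`, then
`E[(g(h^{-1/d}(z-Z)) - g(h^{-1/d}(z'-Z)))²] ≤ (2β₂²/β₁) h ∫ (g(x) - g(x + h^{-1/d}(z'-z)))² dx`. -/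
theorem stmt_8 (d : ℕ) (hd : 0 < d)
    (f g : EuclideanSpace ℝ (Fin d) → ℝ)
    (J : Set (EuclideanSpace ℝ (Fin d))) (hJ : IsCompact J)
    (γ β₁ β₂ κ : ℝ) (hγ : 0 < γ) (hβ₁ : 0 < β₁)
    (hfmeas : Measurable f) (hf0 : ∀ x, 0 ≤ f x) (hfint : ∫ x, f x = 1)
    (hβ : ∀ x ∈ cthickening γ J, β₁ ≤ f x ∧ f x ≤ β₂)
    (hgmeas : Measurable g) (hgb : ∀ x, |g x| ≤ κ) (hgsupp : ∀ x, x ∉ unitCube d → g x = 0)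
    (h : ℝ) (hh : 0 < h) (z z' : EuclideanSpace ℝ (Fin d)) (hz : z ∈ J) (hz' : z' ∈ J)
    (hcz : (fun u => z - h ^ (1 / (d:ℝ)) • u) '' unitCube d ⊆ cthickening γ J)
    (hcz' : (fun u => z' - h ^ (1 / (d:ℝ)) • u) '' unitCube d ⊆ cthickening γ J) :
    (∫ x, (g ((h ^ (1 / (d:ℝ)))⁻¹ • (z - x)) - g ((h ^ (1 / (d:ℝ)))⁻¹ • (z' - x))) ^ 2 * f x) ≤
      2 * β₂ ^ 2 / β₁ * h *
        ∫ x, (g x - g (x + (h ^ (1 / (d:ℝ)))⁻¹ • (z' - z))) ^ 2 :=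
  stmt_8_general d hd f g J γ β₁ β₂ hβ₁ hβ hgmeas hgsupp h hh z z' hcz hcz'
end

section
/- Let Z have Lebesgue density f on R^d with f continuous at z and f(z) > 0, let g_1, g_2 be bounded measurable functions supported in I^d = [-1/2,1/2]^d, and for h ∈ (0,1) define σ_h(g_1, g_2) = (h f(z))^{-1} Cov(g_1(h^{-1/d}(z - Z)), g_2(h^{-1/d}(z - Z))). If additionally f is bounded and uniformly continuous on a neighborhood of z, then σ_h(g_1, g_2) → ∫_{I^d} g_1(u) g_2(u) du as h ↓ 0. -/
/-!
After the substitution `x = z - h^{1/d} u`, each of the three integrals in the covariance equals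
`h ∫ g u f(z - h^{1/d} u) du` for `g = g₁ g₂, g₁, g₂`. Since `f` is continuous and bounded near `z`
and `g` is integrable with bounded support, dominated convergence gives
`∫ g u f(z - r u) du → f(z) ∫ g` as `r → 0`. Dividing by `h f(z)`, the `E[g₁ g₂]` term tends to
`∫ g₁ g₂`, while the product of the means is `h² · O(1)` and vanishes after division by `h`.
-/

open MeasureTheory Filter

open Topology Bornology Function

lemma norm_le_sqrt_of_mem_unitCube {d : ℕ} {x : EuclideanSpace ℝ (Fin d)}
    (hx : x ∈ unitCube d) : ‖x‖ ≤ √d := by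
  rw [EuclideanSpace.norm_eq]
  gcongr
  calc ∑ i, ‖x i‖ ^ 2 ≤ ∑ _i : Fin d, (1 : ℝ) := by
        gcongr with i
        have hxi : ‖x i‖ ≤ 1 / 2 := hx i
        nlinarith [norm_nonneg (x i)]
    _ = d := by simp

lemma isBounded_unitCube (d : ℕ) : IsBounded (unitCube d) :=
  isBounded_iff_forall_norm_le.2 ⟨√d, fun _ => norm_le_sqrt_of_mem_unitCube⟩

lemma integrable_of_abs_le_of_support_subset {α : Type*} [MeasurableSpace α] {μ : Measure α}
    {g : α → ℝ} {S : Set α} {κ : ℝ} (hS : μ S ≠ ⊤) (hg : AEStronglyMeasurable g μ)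
    (hgκ : ∀ x, |g x| ≤ κ) (hgS : support g ⊆ S) : Integrable g μ :=
  (integrableOn_iff_integrable_of_support_subset hgS).1 <|
    Measure.integrableOn_of_bounded hS hg (ae_of_all _ hgκ)

section NormedSpace

variable {E : Type*} [NormedAddCommGroup E] [NormedSpace ℝ E]

lemma eventually_sub_smul_mem {S U : Set E} {z : E} (hS : IsBounded S) (hU : U ∈ 𝓝 z) :
    ∀ᶠ r in 𝓝 (0 : ℝ), ∀ u ∈ S, z - r • u ∈ U := by
  have hV : (z - ·) ⁻¹' U ∈ 𝓝 (0 : E) :=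
    (continuous_const.sub continuous_id).continuousAt.preimage_mem_nhds (by simpa using hU)
  have hsmall := ((NormedSpace.isVonNBounded_iff ℝ).2 hS).tendsto_smallSets_nhds
  filter_upwards [tendsto_smallSets_iff.1 hsmall _ hV] with r hr u hu
    using hr (Set.smul_mem_smul_set hu)

variable [MeasurableSpace E]

lemma integral_comp_inv_smul_sub_mul [BorelSpace E] [FiniteDimensional ℝ E] (μ : Measure E)
    [μ.IsAddHaarMeasure] (f g : E → ℝ) (z : E) {r : ℝ} (hr : 0 < r) :
    ∫ x, g (r⁻¹ • (z - x)) * f x ∂μ = r ^ Module.finrank ℝ E * ∫ u, g u * f (z - r • u) ∂μ :=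
  calc ∫ x, g (r⁻¹ • (z - x)) * f x ∂μ = ∫ y, g (r⁻¹ • y) * f (z - y) ∂μ := by
        simpa using integral_sub_left_eq_self (fun y => g (r⁻¹ • y) * f (z - y)) μ z
    _ = ∫ y, (fun u => g u * f (z - r • u)) (r⁻¹ • y) ∂μ := by
        simp [smul_smul, hr.ne']
    _ = r ^ Module.finrank ℝ E * ∫ u, g u * f (z - r • u) ∂μ :=
        (Measure.integral_comp_inv_smul_of_nonneg μ (fun u => g u * f (z - r • u)) hr.le).trans
          (smul_eq_mul _ _)

theorem tendsto_integral_mul_comp_sub_smul [BorelSpace E] {μ : Measure E} {f g : E → ℝ}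
    {z : E} {U : Set E} {M : ℝ} (hf : Measurable f) (hfz : ContinuousAt f z) (hU : U ∈ 𝓝 z)
    (hfU : ∀ x ∈ U, |f x| ≤ M) (hg : Integrable g μ) (hgS : IsBounded (support g)) :
    Tendsto (fun r : ℝ => ∫ u, g u * f (z - r • u) ∂μ) (𝓝 0) (𝓝 (f z * ∫ u, g u ∂μ)) := by
  rw [← integral_const_mul]
  refine tendsto_integral_filter_of_dominated_convergence (fun u => ‖g u‖ * M)
    (Eventually.of_forall fun r => hg.aestronglyMeasurable.mul
      (hf.comp (continuous_const.sub (continuous_const_smul r)).measurable).aestronglyMeasurable)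
    ?_ (hg.norm.mul_const M) (ae_of_all _ fun u => ?_)
  · filter_upwards [eventually_sub_smul_mem hgS hU] with r hr
    refine ae_of_all _ fun u => ?_
    by_cases hu : g u = 0
    · simp [hu]
    · rw [norm_mul]
      exact mul_le_mul_of_nonneg_left (hfU _ (hr u hu)) (norm_nonneg _)
  · have hshift : Tendsto (fun r : ℝ => z - r • u) (𝓝 0) (𝓝 z) :=
      (continuous_const.sub (continuous_id.smul continuous_const)).tendsto' 0 z (by simp)
    rw [mul_comm (f z)]
    exact tendsto_const_nhds.mul (hfz.tendsto.comp hshift)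

end NormedSpace

lemma integral_comp_rpow_inv_smul_sub_mul {d : ℕ} (hd : 0 < d)
    (f g : EuclideanSpace ℝ (Fin d) → ℝ) (z : EuclideanSpace ℝ (Fin d)) {h : ℝ} (hh : 0 < h) :
    ∫ x, g ((h ^ (1 / (d:ℝ)))⁻¹ • (z - x)) * f x = h * ∫ u, g u * f (z - h ^ (1 / (d:ℝ)) • u) := by
  rw [integral_comp_inv_smul_sub_mul volume f g z (Real.rpow_pos_of_pos hh _),
    finrank_euclideanSpace_fin, one_div, Real.rpow_inv_natCast_pow hh.le hd.ne']

lemma tendsto_integral_mul_comp_sub_rpow_smul {d : ℕ} (hd : 0 < d)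
    {f g : EuclideanSpace ℝ (Fin d) → ℝ} {z : EuclideanSpace ℝ (Fin d)}
    {U : Set (EuclideanSpace ℝ (Fin d))} {M κ : ℝ} (hf : Measurable f) (hfz : ContinuousAt f z)
    (hU : U ∈ 𝓝 z) (hfU : ∀ x ∈ U, |f x| ≤ M) (hg : Measurable g) (hgκ : ∀ x, |g x| ≤ κ)
    (hgS : support g ⊆ unitCube d) :
    Tendsto (fun h : ℝ => ∫ u, g u * f (z - h ^ (1 / (d:ℝ)) • u)) (𝓝[>] 0)
      (𝓝 (f z * ∫ u, g u)) := by
  have hroot : Tendsto (fun h : ℝ => h ^ (1 / (d:ℝ))) (𝓝[>] 0) (𝓝 0) :=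
    ((Real.continuous_rpow_const (by positivity)).tendsto' 0 0
      (Real.zero_rpow (by positivity))).mono_left nhdsWithin_le_nhds
  have hgint : Integrable g :=
    integrable_of_abs_le_of_support_subset (isBounded_unitCube d).measure_lt_top.ne
      hg.aestronglyMeasurable hgκ hgS
  exact (tendsto_integral_mul_comp_sub_smul hf hfz hU hfU hgint
    ((isBounded_unitCube d).subset hgS)).comp hroot

theorem stmt_10_general (d : ℕ) (hd : 0 < d)
    (f g₁ g₂ : EuclideanSpace ℝ (Fin d) → ℝ) (z : EuclideanSpace ℝ (Fin d))
    (hfmeas : Measurable f) (hf0 : ∀ x, 0 ≤ f x)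
    (hfz : 0 < f z)
    (U : Set (EuclideanSpace ℝ (Fin d))) (hU : U ∈ nhds z)
    (M : ℝ) (hfb : ∀ x ∈ U, f x ≤ M)
    (hfuc : ∀ ε : ℝ, 0 < ε → ∃ δ : ℝ, 0 < δ ∧
      ∀ x ∈ U, ∀ y ∈ U, dist x y < δ → |f x - f y| < ε)
    (κ₁ κ₂ : ℝ)
    (hg₁meas : Measurable g₁) (hg₁b : ∀ x, |g₁ x| ≤ κ₁)
    (hg₁supp : ∀ x, x ∉ unitCube d → g₁ x = 0)
    (hg₂meas : Measurable g₂) (hg₂b : ∀ x, |g₂ x| ≤ κ₂)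
    (hg₂supp : ∀ x, x ∉ unitCube d → g₂ x = 0) :
    Tendsto (fun h : ℝ => (h * f z)⁻¹ *
        ((∫ x, g₁ ((h ^ (1 / (d:ℝ)))⁻¹ • (z - x)) * g₂ ((h ^ (1 / (d:ℝ)))⁻¹ • (z - x)) * f x) -
          (∫ x, g₁ ((h ^ (1 / (d:ℝ)))⁻¹ • (z - x)) * f x) *
            ∫ x, g₂ ((h ^ (1 / (d:ℝ)))⁻¹ • (z - x)) * f x))
      (nhdsWithin 0 (Set.Ioi 0)) (nhds (∫ x in unitCube d, g₁ x * g₂ x)) := by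
  have hfcont : ContinuousAt f z :=
    (Metric.uniformContinuousOn_iff.2 hfuc).continuousOn.continuousAt hU
  have hfU : ∀ x ∈ U, |f x| ≤ M := fun x hx => (abs_of_nonneg (hf0 x)).trans_le (hfb x hx)
  have hg₁₂supp : ∀ x, x ∉ unitCube d → g₁ x * g₂ x = 0 := fun x hx => by
    rw [hg₁supp x hx, zero_mul]
  have hg₁₂b : ∀ x, |g₁ x * g₂ x| ≤ κ₁ * κ₂ := fun x => by
    rw [abs_mul]
    exact mul_le_mul (hg₁b x) (hg₂b x) (abs_nonneg _) ((abs_nonneg _).trans (hg₁b x))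
  have hlim := tendsto_const_nhds (x := (f z)⁻¹) |>.mul <|
    (tendsto_integral_mul_comp_sub_rpow_smul (g := fun u => g₁ u * g₂ u) hd hfmeas hfcont hU hfU
      (hg₁meas.mul hg₂meas)
      hg₁₂b (support_subset_iff'.2 hg₁₂supp)).sub <|
    (show Tendsto (fun h : ℝ => h) (𝓝[>] 0) (𝓝 0) from nhdsWithin_le_nhds).mul <|
      (tendsto_integral_mul_comp_sub_rpow_smul hd hfmeas hfcont hU hfU hg₁meas hg₁b
        (support_subset_iff'.2 hg₁supp)).mul
      (tendsto_integral_mul_comp_sub_rpow_smul hd hfmeas hfcont hU hfU hg₂meas hg₂b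
        (support_subset_iff'.2 hg₂supp))
  rw [zero_mul, sub_zero, inv_mul_cancel_left₀ hfz.ne'] at hlim
  rw [setIntegral_eq_integral_of_forall_compl_eq_zero hg₁₂supp]
  refine hlim.congr' ?_
  filter_upwards [self_mem_nhdsWithin] with h (hh : 0 < h)
  rw [integral_comp_rpow_inv_smul_sub_mul hd f (fun u => g₁ u * g₂ u) z hh,
    integral_comp_rpow_inv_smul_sub_mul hd f g₁ z hh,
    integral_comp_rpow_inv_smul_sub_mul hd f g₂ z hh]
  field_simp

/-- Convergence of the normalized local covariance: if `f` is a density, positive at `z`,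
bounded and uniformly continuous on a neighborhood `U` of `z`, and `g₁, g₂` are bounded
measurable functions supported in `I^d`, then
`σ_h(g₁,g₂) = (h f(z))⁻¹ Cov(g₁(h^{-1/d}(z-Z)), g₂(h^{-1/d}(z-Z))) → ∫_{I^d} g₁ g₂` as `h ↓ 0`. -/
theorem stmt_10 (d : ℕ) (hd : 0 < d)
    (f g₁ g₂ : EuclideanSpace ℝ (Fin d) → ℝ) (z : EuclideanSpace ℝ (Fin d))
    (hfmeas : Measurable f) (hf0 : ∀ x, 0 ≤ f x) (hfint : ∫ x, f x = 1)
    (hfz : 0 < f z)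
    (U : Set (EuclideanSpace ℝ (Fin d))) (hU : U ∈ nhds z)
    (M : ℝ) (hfb : ∀ x ∈ U, f x ≤ M)
    (hfuc : ∀ ε : ℝ, 0 < ε → ∃ δ : ℝ, 0 < δ ∧
      ∀ x ∈ U, ∀ y ∈ U, dist x y < δ → |f x - f y| < ε)
    (κ₁ κ₂ : ℝ)
    (hg₁meas : Measurable g₁) (hg₁b : ∀ x, |g₁ x| ≤ κ₁)
    (hg₁supp : ∀ x, x ∉ unitCube d → g₁ x = 0)
    (hg₂meas : Measurable g₂) (hg₂b : ∀ x, |g₂ x| ≤ κ₂)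
    (hg₂supp : ∀ x, x ∉ unitCube d → g₂ x = 0) :
    Tendsto (fun h : ℝ => (h * f z)⁻¹ *
        ((∫ x, g₁ ((h ^ (1 / (d:ℝ)))⁻¹ • (z - x)) * g₂ ((h ^ (1 / (d:ℝ)))⁻¹ • (z - x)) * f x) -
          (∫ x, g₁ ((h ^ (1 / (d:ℝ)))⁻¹ • (z - x)) * f x) *
            ∫ x, g₂ ((h ^ (1 / (d:ℝ)))⁻¹ • (z - x)) * f x))
      (nhdsWithin 0 (Set.Ioi 0)) (nhds (∫ x in unitCube d, g₁ x * g₂ x)) :=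
  stmt_10_general d hd f g₁ g₂ z hfmeas hf0 hfz U hU M hfb hfuc κ₁ κ₂ hg₁meas hg₁b hg₁supp hg₂meas
    hg₂b hg₂supp
end
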